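/- Let P, P* be probability distributions on a finite domain Ω partitioned into buckets Δ₀, Δ₁, …, Δ_ℓ. Suppose (1) P(Δ₀) ≤ c₂ε₂ and P*(Δ₀) ≤ c₁ε₂, (2) |P(Δⱼ) − P*(Δⱼ)| ≤ c₃ε₂/ℓ for all 1 ≤ j ≤ ℓ, and (3) for each 1 ≤ j ≤ ℓ with P(Δⱼ)·P*(Δⱼ) > 0, ‖P|Δⱼ − P*|Δⱼ‖₁ ≤ c₄ε₂/(ℓ·P*(Δⱼ)). Then ‖P − P*‖₁ ≤ (c₁ + c₂ + 2c₃ + c₄)·ε₂. -/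
import Mathlib


/-- If the buckets `Δ₀, …, Δ_ℓ` partition `Ω`, the leftover bucket has small mass
under both distributions, the bucket masses are close, and the conditional
distributions within each bucket are close, then `‖P − P*‖₁ ≤ (c₁+c₂+2c₃+c₄)ε₂`. -/
theorem bucket_closeness_implies_l1_closeness {Ω : Type*} [Fintype Ω]
    (P Pstar : Ω → ℝ) (ℓ : ℕ) (Δ : ℕ → Finset Ω) (c₁ c₂ c₃ c₄ ε₂ : ℝ)
    (hc₁ : 0 < c₁) (hc₂ : 0 < c₂) (hc₃ : 0 < c₃) (hc₄ : 0 < c₄) (hε₂ : 0 < ε₂)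
    (hP0 : ∀ x, 0 ≤ P x) (hP1 : ∑ x, P x = 1)
    (hQ0 : ∀ x, 0 ≤ Pstar x) (hQ1 : ∑ x, Pstar x = 1)
    (hdisj : ∀ i ∈ Finset.range (ℓ + 1), ∀ j ∈ Finset.range (ℓ + 1), i ≠ j →
      Disjoint (Δ i) (Δ j))
    (hcover : ∀ x : Ω, ∃ j ∈ Finset.range (ℓ + 1), x ∈ Δ j)
    (h0P : ∑ x ∈ Δ 0, P x ≤ c₂ * ε₂)
    (h0Q : ∑ x ∈ Δ 0, Pstar x ≤ c₁ * ε₂)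
    (hglobal : ∀ j ∈ Finset.Icc 1 ℓ,
      |∑ x ∈ Δ j, P x - ∑ x ∈ Δ j, Pstar x| ≤ c₃ * ε₂ / ℓ)
    (hlocal : ∀ j ∈ Finset.Icc 1 ℓ,
      0 < (∑ x ∈ Δ j, P x) * (∑ x ∈ Δ j, Pstar x) →
      ∑ x ∈ Δ j, |P x / (∑ y ∈ Δ j, P y) - Pstar x / (∑ y ∈ Δ j, Pstar y)| ≤
        c₄ * ε₂ / (ℓ * ∑ x ∈ Δ j, Pstar x)) :
    ∑ x, |P x - Pstar x| ≤ (c₁ + c₂ + 2 * c₃ + c₄) * ε₂ := by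
  classical
  -- split the sum over buckets
  have huniv : (Finset.univ : Finset Ω) = (Finset.range (ℓ + 1)).biUnion Δ := by
    ext x
    simp only [Finset.mem_univ, true_iff, Finset.mem_biUnion]
    exact hcover x
  have hsplit : ∀ f : Ω → ℝ,
      ∑ x, f x = ∑ j ∈ Finset.range (ℓ + 1), ∑ x ∈ Δ j, f x := by
    intro f
    rw [huniv, Finset.sum_biUnion]
    intro i hi j hj hij
    exact hdisj i hi j hj hij
  have hrange : Finset.range (ℓ + 1) = insert 0 (Finset.Icc 1 ℓ) := by
    ext j
    simp only [Finset.mem_range, Finset.mem_insert, Finset.mem_Icc]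
    omega
  have h0notin : (0 : ℕ) ∉ Finset.Icc 1 ℓ := by simp
  -- per-bucket bound
  have hbucket : ∀ j ∈ Finset.Icc 1 ℓ,
      ∑ x ∈ Δ j, |P x - Pstar x| ≤ (c₃ + c₄) * ε₂ / ℓ := by
    intro j hj
    have hl1 : 1 ≤ ℓ := (Finset.mem_Icc.mp hj).1.trans (Finset.mem_Icc.mp hj).2
    have hlpos : (0:ℝ) < (ℓ : ℝ) := by exact_mod_cast Nat.pos_of_ne_zero (by omega)
    set a := ∑ x ∈ Δ j, P x with ha
    set b := ∑ x ∈ Δ j, Pstar x with hb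
    have ha0 : 0 ≤ a := Finset.sum_nonneg fun x _ => hP0 x
    have hb0 : 0 ≤ b := Finset.sum_nonneg fun x _ => hQ0 x
    have hab := hglobal j hj
    have hmono : c₃ * ε₂ / ℓ ≤ (c₃ + c₄) * ε₂ / ℓ := by
      gcongr
      nlinarith
    rcases eq_or_lt_of_le ha0 with haz | hap
    · -- a = 0, so P vanishes on Δ j
      have hPz : ∀ x ∈ Δ j, P x = 0 := by
        intro x hx
        have := (Finset.sum_eq_zero_iff_of_nonneg (fun y _ => hP0 y)).mp haz.symm
        exact this x hx
      calc ∑ x ∈ Δ j, |P x - Pstar x| = b := by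
            rw [hb]
            apply Finset.sum_congr rfl
            intro x hx
            rw [hPz x hx, zero_sub, abs_neg, abs_of_nonneg (hQ0 x)]
        _ ≤ c₃ * ε₂ / ℓ := by
            have : |a - b| = b := by rw [← haz, zero_sub, abs_neg, abs_of_nonneg hb0]
            linarith [hab, this.symm.le.trans hab]
        _ ≤ (c₃ + c₄) * ε₂ / ℓ := hmono
    rcases eq_or_lt_of_le hb0 with hbz | hbp
    · have hQz : ∀ x ∈ Δ j, Pstar x = 0 := by
        intro x hx
        have := (Finset.sum_eq_zero_iff_of_nonneg (fun y _ => hQ0 y)).mp hbz.symm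
        exact this x hx
      calc ∑ x ∈ Δ j, |P x - Pstar x| = a := by
            rw [ha]
            apply Finset.sum_congr rfl
            intro x hx
            rw [hQz x hx, sub_zero, abs_of_nonneg (hP0 x)]
        _ ≤ c₃ * ε₂ / ℓ := by
            have : |a - b| = a := by rw [← hbz, sub_zero, abs_of_nonneg ha0]
            linarith [this.symm.le.trans hab]
        _ ≤ (c₃ + c₄) * ε₂ / ℓ := hmono
    -- both positive
    have hloc := hlocal j hj (mul_pos hap hbp)
    have hane : a ≠ 0 := ne_of_gt hap
    have hbne : b ≠ 0 := ne_of_gt hbp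
    have hpoint : ∀ x ∈ Δ j,
        |P x - Pstar x| ≤ (P x / a) * |a - b| + b * |P x / a - Pstar x / b| := by
      intro x hx
      have hid : P x - Pstar x = (P x / a) * (a - b) + b * (P x / a - Pstar x / b) := by
        field_simp
        ring
      calc |P x - Pstar x|
          ≤ |(P x / a) * (a - b)| + |b * (P x / a - Pstar x / b)| := by
            rw [hid]; exact abs_add_le _ _
        _ = (P x / a) * |a - b| + b * |P x / a - Pstar x / b| := by
            rw [abs_mul, abs_mul, abs_of_nonneg (div_nonneg (hP0 x) ha0),
              abs_of_nonneg hb0]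
    calc ∑ x ∈ Δ j, |P x - Pstar x|
        ≤ ∑ x ∈ Δ j, ((P x / a) * |a - b| + b * |P x / a - Pstar x / b|) :=
          Finset.sum_le_sum hpoint
      _ = |a - b| + b * ∑ x ∈ Δ j, |P x / a - Pstar x / b| := by
          rw [Finset.sum_add_distrib, ← Finset.mul_sum]
          have h1 : ∑ x ∈ Δ j, P x / a * |a - b| = |a - b| := by
            rw [← Finset.sum_mul, ← Finset.sum_div, ← ha, div_self hane, one_mul]
          rw [h1]
      _ ≤ c₃ * ε₂ / ℓ + b * (c₄ * ε₂ / (ℓ * b)) := by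
          have : b * ∑ x ∈ Δ j, |P x / a - Pstar x / b| ≤ b * (c₄ * ε₂ / (ℓ * b)) :=
            mul_le_mul_of_nonneg_left hloc hb0
          linarith
      _ = (c₃ + c₄) * ε₂ / ℓ := by
          field_simp
  -- combine
  rw [hsplit (fun x => |P x - Pstar x|), hrange, Finset.sum_insert h0notin]
  have h0 : ∑ x ∈ Δ 0, |P x - Pstar x| ≤ (c₁ + c₂) * ε₂ := by
    calc ∑ x ∈ Δ 0, |P x - Pstar x| ≤ ∑ x ∈ Δ 0, (P x + Pstar x) := by
          apply Finset.sum_le_sum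
          intro x _
          calc |P x - Pstar x| ≤ |P x| + |Pstar x| := abs_sub _ _
            _ = P x + Pstar x := by
              rw [abs_of_nonneg (hP0 x), abs_of_nonneg (hQ0 x)]
      _ = ∑ x ∈ Δ 0, P x + ∑ x ∈ Δ 0, Pstar x := Finset.sum_add_distrib
      _ ≤ c₂ * ε₂ + c₁ * ε₂ := add_le_add h0P h0Q
      _ = (c₁ + c₂) * ε₂ := by ring
  have hrest : ∑ j ∈ Finset.Icc 1 ℓ, ∑ x ∈ Δ j, |P x - Pstar x|
      ≤ (c₃ + c₄) * ε₂ := by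
    calc ∑ j ∈ Finset.Icc 1 ℓ, ∑ x ∈ Δ j, |P x - Pstar x|
        ≤ ∑ j ∈ Finset.Icc 1 ℓ, (c₃ + c₄) * ε₂ / ℓ := Finset.sum_le_sum hbucket
      _ ≤ (c₃ + c₄) * ε₂ := by
          rw [Finset.sum_const, Nat.card_Icc, Nat.add_sub_cancel, nsmul_eq_mul]
          rcases Nat.eq_zero_or_pos ℓ with h | h
          · simp only [h, Nat.cast_zero, zero_mul]
            positivity
          · have hlpos : (0:ℝ) < (ℓ:ℝ) := by exact_mod_cast h
            exact le_of_eq (by field_simp)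
  nlinarith [h0, hrest]
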